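/- G_{f_0} is expansive on (X,d) with expansiveness constant 1: for all distinct X, Y ∈ X there exists n ∈ ℕ with d(G_{f_0}^n(X), G_{f_0}^n(Y)) ≥ 1. -/
import Mathlib


open scoped BigOperators
open Filter Topology

abbrev XX (N : ℕ) := (ℕ → Fin N) × (Fin N → Bool)

noncomputable def de (N : ℕ) (E F : Fin N → Bool) : ℝ :=
  ∑ k : Fin N, if E k = F k then (0:ℝ) else 1

noncomputable def ds (N : ℕ) (S T : ℕ → Fin N) : ℝ :=
  (9 / (N:ℝ)) * ∑' k : ℕ, |((S k : ℕ) : ℝ) - ((T k : ℕ) : ℝ)| / 10 ^ (k + 1)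

noncomputable def dX (N : ℕ) (x y : XX N) : ℝ := de N x.2 y.2 + ds N x.1 y.1

def Ff (N : ℕ) (f : (Fin N → Bool) → Fin N → Bool) (k : Fin N) (E : Fin N → Bool) :
    Fin N → Bool := fun j => if j = k then f E j else E j

def Gf (N : ℕ) (f : (Fin N → Bool) → Fin N → Bool) (x : XX N) : XX N :=
  (fun n => x.1 (n + 1), Ff N f (x.1 0) x.2)

def f0 (N : ℕ) : (Fin N → Bool) → Fin N → Bool := fun E k => !(E k)

private lemma ds_nonneg (N : ℕ) (S T : ℕ → Fin N) : 0 ≤ ds N S T := by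
  apply mul_nonneg (by positivity)
  exact tsum_nonneg fun k => by positivity

private lemma de_ge_one (N : ℕ) {E F : Fin N → Bool} (h : E ≠ F) : 1 ≤ de N E F := by
  obtain ⟨k, hk⟩ := Function.ne_iff.mp h
  have : (if E k = F k then (0:ℝ) else 1) ≤ de N E F := by
    apply Finset.single_le_sum (f := fun j => if E j = F j then (0:ℝ) else 1)
    · intro i _; split <;> norm_num
    · exact Finset.mem_univ k
  simpa [if_neg hk] using this

private lemma iterate_fst (N : ℕ) (f : (Fin N → Bool) → Fin N → Bool) :
    ∀ (n : ℕ) (x : XX N), ((Gf N f)^[n] x).1 = fun m => x.1 (m + n) := by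
  intro n
  induction n with
  | zero => intro x; simp
  | succ n ih =>
      intro x
      rw [Function.iterate_succ_apply, ih]
      funext m
      simp [Gf, Nat.add_assoc, Nat.add_comm 1 n]

private lemma iterate_snd (N : ℕ) (f : (Fin N → Bool) → Fin N → Bool) :
    ∀ (n : ℕ) (S T : ℕ → Fin N) (E : Fin N → Bool), (∀ i < n, S i = T i) →
      ((Gf N f)^[n] (S, E)).2 = ((Gf N f)^[n] (T, E)).2 := by
  intro n
  induction n with
  | zero => intro S T E _; rfl
  | succ n ih =>
      intro S T E h
      rw [Function.iterate_succ_apply, Function.iterate_succ_apply]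
      have h0 : S 0 = T 0 := h 0 (Nat.succ_pos n)
      show ((Gf N f)^[n] (fun m => S (m+1), Ff N f (S 0) E)).2
          = ((Gf N f)^[n] (fun m => T (m+1), Ff N f (T 0) E)).2
      rw [h0]
      exact ih _ _ _ fun i hi => h (i+1) (Nat.succ_lt_succ hi)

/-- G_{f_0} is expansive with expansiveness constant 1. -/
theorem stmt15 (N : ℕ) (hN : 1 ≤ N) :
    ∀ x y : XX N, x ≠ y →
      ∃ n : ℕ, 1 ≤ dX N ((Gf N (f0 N))^[n] x) ((Gf N (f0 N))^[n] y) := by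
  intro x y hxy
  by_cases hE : x.2 = y.2
  · -- strategies differ
    have hS : x.1 ≠ y.1 := by
      intro h; exact hxy (Prod.ext h hE)
    have hex : ∃ k, x.1 k ≠ y.1 k := Function.ne_iff.mp hS
    classical
    set k := Nat.find hex with hk
    have hkne : x.1 k ≠ y.1 k := Nat.find_spec hex
    have hlt : ∀ i < k, x.1 i = y.1 i := fun i hi => by
      by_contra hc; exact absurd (Nat.find_le hc) (Nat.not_le.mpr hi)
    refine ⟨k + 1, ?_⟩
    set G := Gf N (f0 N)
    have hA1 : (G^[k] x).1 0 = x.1 k := by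
      rw [show (G^[k] x) = G^[k] (x.1, x.2) from by simp, iterate_fst]
      simp
    have hB1 : (G^[k] y).1 0 = y.1 k := by
      rw [show (G^[k] y) = G^[k] (y.1, y.2) from by simp, iterate_fst]
      simp
    have hsnd : (G^[k] x).2 = (G^[k] y).2 := by
      rw [show (G^[k] x) = G^[k] (x.1, x.2) from by simp,
          show (G^[k] y) = G^[k] (y.1, y.2) from by simp, hE]
      exact iterate_snd N (f0 N) k x.1 y.1 y.2 hlt
    have hne2 : (G^[k+1] x).2 ≠ (G^[k+1] y).2 := by
      rw [Function.iterate_succ_apply', Function.iterate_succ_apply']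
      intro h
      have := congrFun h (x.1 k)
      simp only [G, Gf, Ff, hA1, hB1, hsnd] at this
      simp [f0, hkne] at this
    have := de_ge_one N hne2
    calc (1:ℝ) ≤ de N (G^[k+1] x).2 (G^[k+1] y).2 := this
      _ ≤ dX N (G^[k+1] x) (G^[k+1] y) :=
        le_add_of_nonneg_right (ds_nonneg N _ _)
  · refine ⟨0, ?_⟩
    simp only [Function.iterate_zero_apply, dX]
    calc (1:ℝ) ≤ de N x.2 y.2 := de_ge_one N hE
      _ ≤ _ := le_add_of_nonneg_right (ds_nonneg N _ _)
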